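/- arXiv:1103.3893 — 2 statements merged into one kernel-verified Lean document; each statement's English description precedes it below -/
import Mathlib

section
/- For $x > -1$, $\int_0^\pi (2\sin(\theta/2))^x\,d\theta = \pi\,\frac{\Gamma(1+x)}{\Gamma(1+x/2)^2}$. -/
/-!
Halving the angle and substituting `t = sin² φ` turns the integral into the Beta integral
`2 ^ x · B((x + 1) / 2, 1 / 2)`. Legendre's duplication formula
`Γ((x + 1) / 2) Γ(1 + x / 2) = 2 ^ (-x) √π Γ(1 + x)`, together with `Γ(1 / 2) = √π`,
then turns this into `π Γ(1 + x) / Γ(1 + x / 2) ^ 2`.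
-/

open Real MeasureTheory Set

theorem integral_rpow_mul_one_sub_rpow {u v : ℝ} (hu : 0 < u) (hv : 0 < v) :
    ∫ t in (0:ℝ)..1, t ^ (u - 1) * (1 - t) ^ (v - 1)
      = Gamma u * Gamma v / Gamma (u + v) := by
  have hcomplex := Complex.betaIntegral_eq_Gamma_mul_div u v (by simpa) (by simpa)
  rw [Complex.betaIntegral, ← intervalIntegral.integral_congr (f := fun t : ℝ ↦
      ((t ^ (u - 1) * (1 - t) ^ (v - 1) : ℝ) : ℂ)), intervalIntegral.integral_ofReal] at hcomplex
  · rw [← Complex.ofReal_add, Complex.Gamma_ofReal, Complex.Gamma_ofReal,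
      Complex.Gamma_ofReal] at hcomplex
    exact_mod_cast hcomplex
  · intro t ht
    rw [uIcc_of_le zero_le_one] at ht
    push_cast [Complex.ofReal_cpow ht.1, Complex.ofReal_cpow (sub_nonneg.2 ht.2)]
    rfl

theorem sq_rpow_div_two {s : ℝ} (hs : 0 ≤ s) (c : ℝ) : (s ^ 2) ^ (c / 2) = s ^ c := by
  rw [← rpow_natCast, ← rpow_mul hs]
  congr 1
  ring

theorem hasDerivAt_sin_sq (φ : ℝ) : HasDerivAt (fun φ ↦ sin φ ^ 2) (2 * sin φ * cos φ) φ := by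
  refine ((hasDerivAt_sin φ).fun_pow 2).congr_deriv ?_
  norm_num

theorem integral_sin_rpow_mul_cos_rpow {a b : ℝ} (ha : -1 < a) (hb : -1 < b) :
    ∫ φ in (0:ℝ)..π / 2, sin φ ^ a * cos φ ^ b
      = Gamma ((a + 1) / 2) * Gamma ((b + 1) / 2) / (2 * Gamma ((a + b) / 2 + 1)) := by
  have hsub := integral_Icc_deriv_smul_of_deriv_nonneg (a := 0) (b := π / 2)
    (g := fun t ↦ t ^ ((a + 1) / 2 - 1) * (1 - t) ^ ((b + 1) / 2 - 1))
    (by fun_prop) (fun φ _ ↦ hasDerivAt_sin_sq φ)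
    (fun φ hφ ↦ by
      have := sin_pos_of_pos_of_lt_pi hφ.1 (by linarith [hφ.2, pi_pos])
      have := cos_pos_of_mem_Ioo ⟨by linarith [hφ.1, pi_pos], hφ.2⟩
      positivity)
    (by positivity)
  have hpoint : ∀ φ ∈ Ioo 0 (π / 2), sin φ ^ a * cos φ ^ b = 2⁻¹ * ((2 * sin φ * cos φ) •
      ((sin φ ^ 2) ^ ((a + 1) / 2 - 1) * (1 - sin φ ^ 2) ^ ((b + 1) / 2 - 1))) := by
    intro φ hφ
    have hs := sin_pos_of_pos_of_lt_pi hφ.1 (by linarith [hφ.2, pi_pos])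
    have hc := cos_pos_of_mem_Ioo ⟨by linarith [hφ.1, pi_pos], hφ.2⟩
    rw [← cos_sq', smul_eq_mul, show (a + 1) / 2 - 1 = (a - 1) / 2 by ring,
      show (b + 1) / 2 - 1 = (b - 1) / 2 by ring, sq_rpow_div_two hs.le, sq_rpow_div_two hc.le,
      rpow_sub_one hs.ne', rpow_sub_one hc.ne']
    field_simp
  calc ∫ φ in (0:ℝ)..π / 2, sin φ ^ a * cos φ ^ b
      = 2⁻¹ * ∫ φ in Icc 0 (π / 2), (2 * sin φ * cos φ) •
          ((sin φ ^ 2) ^ ((a + 1) / 2 - 1) * (1 - sin φ ^ 2) ^ ((b + 1) / 2 - 1)) := by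
        rw [intervalIntegral.integral_of_le (by positivity), integral_Ioc_eq_integral_Ioo,
          integral_Icc_eq_integral_Ioo, ← integral_const_mul]
        exact setIntegral_congr_fun measurableSet_Ioo hpoint
    _ = 2⁻¹ * ∫ t in (0:ℝ)..1, t ^ ((a + 1) / 2 - 1) * (1 - t) ^ ((b + 1) / 2 - 1) := by
        rw [hsub, intervalIntegral.integral_of_le zero_le_one, integral_Icc_eq_integral_Ioc]
        simp
    _ = _ := by
        rw [integral_rpow_mul_one_sub_rpow (by linarith) (by linarith)]
        ring_nf

theorem sin_power_integral (x : ℝ) (hx : -1 < x) :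
    ∫ θ in (0:ℝ)..π, (2 * Real.sin (θ/2)) ^ x
      = π * Real.Gamma (1 + x) / (Real.Gamma (1 + x/2))^2 := by
  have hhalf : ∫ φ in (0:ℝ)..π / 2, (2 * sin φ) ^ x
      = 2 ^ x * ∫ φ in (0:ℝ)..π / 2, sin φ ^ x * cos φ ^ (0:ℝ) := by
    rw [← intervalIntegral.integral_const_mul]
    refine intervalIntegral.integral_congr fun φ hφ ↦ ?_
    rw [uIcc_of_le (by positivity)] at hφ
    rw [mul_rpow zero_le_two (sin_nonneg_of_nonneg_of_le_pi hφ.1 (by linarith [hφ.2, pi_pos])),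
      rpow_zero, mul_one]
  have hdup := Gamma_mul_Gamma_add_half ((x + 1) / 2)
  rw [show 2 * ((x + 1) / 2) = 1 + x by ring, show (x + 1) / 2 + 1 / 2 = 1 + x / 2 by ring,
    show 1 - (1 + x) = -x by ring] at hdup
  have hΓ : Gamma (1 + x / 2) ≠ 0 := (Gamma_pos_of_pos (by linarith)).ne'
  rw [intervalIntegral.integral_comp_div (fun θ ↦ (2 * sin θ) ^ x) two_ne_zero, zero_div, hhalf,
    integral_sin_rpow_mul_cos_rpow hx (by norm_num), show (x + 0) / 2 + 1 = 1 + x / 2 by ring,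
    show ((0:ℝ) + 1) / 2 = 1 / 2 by ring, Gamma_one_half_eq, smul_eq_mul,
    eq_div_of_mul_eq hΓ hdup, rpow_neg zero_le_two]
  field_simp
  rw [sq_sqrt pi_pos.le]
end

section
/- $\int_0^\pi \theta \log(2\sin(\theta/2))\,d\theta = \frac{7}{4}\zeta(3)$. -/
/-!
For `|r| < 1`, `log ‖1 - r e^{iθ}‖ = -∑ rⁿ cos (nθ) / n`, and since
`∫₀^π θ cos (nθ) dθ = ((-1)ⁿ - 1) / n²`, integrating termwise against `θ` gives
`∫₀^π θ log ‖1 - r e^{iθ}‖ dθ = ∑ (1 - (-1)ⁿ) rⁿ / n³`. Let `r → 1⁻`. On the left,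
`‖1 - e^{iθ}‖ = 2 sin (θ / 2)` and dominated convergence applies, because
`‖1 - r e^{iθ}‖ ≥ θ / π` for `r ≥ 1/4` bounds `|θ log ‖1 - r e^{iθ}‖|` by `π`; on the right,
Abel's limit theorem applies. Finally `∑ (1 - (-1)ⁿ) / n³ = 2 ∑_{n odd} 1 / n³ = 2 (1 - 1/8) ζ(3)`.
All series are indexed from `n = 0`, whose term vanishes because `x / 0 = 0` in Lean.
-/

open Real Filter Topology Set Interval

lemma integral_mul_cos_nat_mul {n : ℕ} (hn : n ≠ 0) :
    ∫ θ in (0:ℝ)..π, θ * cos (n * θ) = ((-1) ^ n - 1) / (n : ℝ) ^ 2 := by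
  have hn' : (n : ℝ) ≠ 0 := Nat.cast_ne_zero.mpr hn
  have hderiv (θ : ℝ) : HasDerivAt (fun θ => θ * sin (n * θ) / n + cos (n * θ) / n ^ 2)
      (θ * cos (n * θ)) θ := by
    have hlin := (hasDerivAt_id θ).const_mul (n : ℝ)
    refine ((hasDerivAt_id θ).mul hlin.sin |>.div_const (n : ℝ)).add
      (hlin.cos.div_const ((n : ℝ) ^ 2)) |>.congr_deriv ?_
    simp only [id, one_mul, mul_one]
    field_simp
    ring
  rw [intervalIntegral.integral_eq_sub_of_hasDerivAt (fun θ _ => hderiv θ)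
    ((by fun_prop : Continuous fun θ : ℝ => θ * cos (n * θ)).intervalIntegrable _ _)]
  simp only [sin_nat_mul_pi, cos_nat_mul_pi, mul_zero, zero_mul, zero_div, cos_zero]
  field_simp
  ring

lemma norm_one_sub_mul_exp_sq (r θ : ℝ) :
    ‖1 - r * Complex.exp (θ * Complex.I)‖ ^ 2 = (1 - r) ^ 2 + 4 * r * sin (θ / 2) ^ 2 := by
  rw [Complex.sq_norm, Complex.normSq_apply]
  simp only [Complex.sub_re, Complex.sub_im, Complex.one_re, Complex.one_im,
    Complex.re_ofReal_mul, Complex.im_ofReal_mul, Complex.exp_ofReal_mul_I_re,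
    Complex.exp_ofReal_mul_I_im]
  have hcos : cos θ = 1 - 2 * sin (θ / 2) ^ 2 := by
    rw [← cos_two_mul_eq_one_sub, mul_div_cancel₀ θ two_ne_zero]
  linear_combination r ^ 2 * sin_sq_add_cos_sq θ - 2 * r * hcos

lemma norm_one_sub_exp {θ : ℝ} (hθ0 : 0 ≤ θ) (hθ : θ ≤ 2 * π) :
    ‖1 - Complex.exp (θ * Complex.I)‖ = 2 * sin (θ / 2) := by
  have hsin : 0 ≤ sin (θ / 2) := sin_nonneg_of_nonneg_of_le_pi (by linarith) (by linarith)
  rw [← pow_left_inj₀ (norm_nonneg _) (by positivity) two_ne_zero]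
  simpa [mul_pow, show (2 : ℝ) ^ 2 = 4 by norm_num] using norm_one_sub_mul_exp_sq 1 θ

lemma div_pi_le_norm_one_sub_mul_exp {r θ : ℝ} (hr : 1 / 4 ≤ r) (hθ0 : 0 ≤ θ) (hθ : θ ≤ π) :
    θ / π ≤ ‖1 - r * Complex.exp (θ * Complex.I)‖ := by
  have hjordan : θ / π ≤ sin (θ / 2) := by
    have := mul_le_sin (x := θ / 2) (by linarith) (by linarith)
    calc θ / π = 2 / π * (θ / 2) := by field_simp
      _ ≤ sin (θ / 2) := this
  have hpos : 0 ≤ θ / π := by positivity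
  rw [← pow_le_pow_iff_left₀ hpos (norm_nonneg _) two_ne_zero, norm_one_sub_mul_exp_sq]
  nlinarith [sq_nonneg (1 - r), mul_le_mul hjordan hjordan hpos (hpos.trans hjordan)]

lemma hasSum_log_norm_one_sub_mul_exp {r : ℝ} (hr : |r| < 1) (θ : ℝ) :
    HasSum (fun n : ℕ => -(r ^ n * cos (n * θ) / n))
      (Real.log ‖1 - r * Complex.exp (θ * Complex.I)‖) := by
  have hz : ‖(r : ℂ) * Complex.exp (θ * Complex.I)‖ < 1 := by
    simpa [Complex.norm_exp_ofReal_mul_I] using hr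
  have hre (n : ℕ) : (((r : ℂ) * Complex.exp (θ * Complex.I)) ^ n / n).re
      = r ^ n * cos (n * θ) / n := by
    rw [mul_pow, ← Complex.exp_nat_mul, ← mul_assoc,
      show (r : ℂ) ^ n * Complex.exp (n * θ * Complex.I) / n
        = ((r ^ n / n : ℝ) : ℂ) * Complex.exp ((n * θ : ℝ) * Complex.I) by push_cast; ring,
      Complex.re_ofReal_mul, Complex.exp_ofReal_mul_I_re]
    ring
  simpa [hre, Complex.log_re] using
    (Complex.hasSum_re (Complex.hasSum_taylorSeries_neg_log hz)).neg

lemma hasSum_integral_mul_log_norm_one_sub_mul_exp {r : ℝ} (hr : |r| < 1) :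
    HasSum (fun n : ℕ => (1 - (-1) ^ n) / (n : ℝ) ^ 3 * r ^ n)
      (∫ θ in (0:ℝ)..π, θ * Real.log ‖1 - r * Complex.exp (θ * Complex.I)‖) := by
  have hbound (n : ℕ) (θ : ℝ) (hθ : θ ∈ Ι 0 π) :
      ‖θ * -(r ^ n * cos (n * θ) / n)‖ ≤ π * |r| ^ n := by
    rw [uIoc_of_le pi_pos.le] at hθ
    rw [norm_mul, norm_neg, Real.norm_eq_abs, Real.norm_eq_abs, abs_of_pos hθ.1]
    refine mul_le_mul hθ.2 ?_ (abs_nonneg _) pi_pos.le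
    rcases n.eq_zero_or_pos with rfl | hn
    · simp
    rw [abs_div, Nat.abs_cast, abs_mul, abs_pow]
    refine div_le_of_le_mul₀ (Nat.cast_nonneg _) (by positivity) ?_
    nlinarith [abs_cos_le_one (n * θ), pow_nonneg (abs_nonneg r) n,
      (Nat.one_le_cast (α := ℝ)).mpr hn, abs_nonneg (cos (n * θ))]
  have hterm (n : ℕ) : ∫ θ in (0:ℝ)..π, θ * -(r ^ n * cos (n * θ) / n)
      = (1 - (-1) ^ n) / (n : ℝ) ^ 3 * r ^ n := by
    rcases eq_or_ne n 0 with rfl | hn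
    · simp
    simp_rw [show ∀ θ : ℝ, θ * -(r ^ n * cos (n * θ) / n) = -(r ^ n / n) * (θ * cos (n * θ))
        from fun θ => by ring, intervalIntegral.integral_const_mul, integral_mul_cos_nat_mul hn]
    field_simp
    ring
  rw [← funext hterm]
  exact intervalIntegral.hasSum_integral_of_dominated_convergence (fun n _ => π * |r| ^ n)
    (fun n => (by fun_prop : Continuous _).aestronglyMeasurable)
    (fun n => .of_forall (hbound n))
    (.of_forall fun _ _ => (summable_geometric_of_lt_one (abs_nonneg r) hr).mul_left π)
    intervalIntegrable_const
    (.of_forall fun θ _ => (hasSum_log_norm_one_sub_mul_exp hr θ).mul_left θ)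

lemma abs_mul_log_norm_one_sub_mul_exp_le {r θ : ℝ} (hr : 1 / 4 ≤ r) (hr1 : r ≤ 1)
    (hθ0 : 0 < θ) (hθ : θ ≤ π) :
    |θ * Real.log ‖1 - r * Complex.exp (θ * Complex.I)‖| ≤ π := by
  set A := ‖1 - r * Complex.exp (θ * Complex.I)‖
  have hlower : θ / π ≤ A := div_pi_le_norm_one_sub_mul_exp hr hθ0.le hθ
  have hA : 0 < A := (div_pos hθ0 pi_pos).trans_le hlower
  have hupper : A ≤ 2 := by
    calc A ≤ ‖(1 : ℂ)‖ + ‖(r : ℂ) * Complex.exp (θ * Complex.I)‖ := norm_sub_le _ _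
      _ ≤ 2 := by
        rw [norm_one, norm_mul, Complex.norm_exp_ofReal_mul_I, Complex.norm_real,
          Real.norm_eq_abs, abs_of_nonneg (by linarith)]
        linarith
  have hinv : θ * A⁻¹ ≤ π := by
    rw [← div_eq_mul_inv, div_le_iff₀ hA]
    rwa [div_le_iff₀ pi_pos, mul_comm] at hlower
  rw [abs_le]
  constructor
  · nlinarith [one_sub_inv_le_log_of_pos hA]
  · nlinarith [log_le_sub_one_of_pos hA]

lemma tendsto_integral_mul_log_norm_one_sub_mul_exp :
    Tendsto (fun r : ℝ => ∫ θ in (0:ℝ)..π, θ * Real.log ‖1 - r * Complex.exp (θ * Complex.I)‖)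
      (𝓝[<] 1) (𝓝 (∫ θ in (0:ℝ)..π, θ * Real.log (2 * sin (θ / 2)))) := by
  refine intervalIntegral.tendsto_integral_filter_of_dominated_convergence (fun _ => π)
    (.of_forall fun r => (by fun_prop : Measurable _).aestronglyMeasurable) ?_
    intervalIntegrable_const ?_
  · filter_upwards [Ioo_mem_nhdsLT (show (1 / 4 : ℝ) < 1 by norm_num)] with r hr
    refine .of_forall fun θ hθ => ?_
    rw [uIoc_of_le pi_pos.le] at hθ
    exact abs_mul_log_norm_one_sub_mul_exp_le hr.1.le hr.2.le hθ.1 hθ.2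
  · refine .of_forall fun θ hθ => ?_
    rw [uIoc_of_le pi_pos.le] at hθ
    have hnorm := norm_one_sub_exp hθ.1.le (by linarith [hθ.2, pi_pos])
    have hne : ‖1 - Complex.exp (θ * Complex.I)‖ ≠ 0 := by
      rw [hnorm]
      exact (mul_pos two_pos (sin_pos_of_pos_of_lt_pi (by linarith [hθ.1])
        (by linarith [hθ.2, pi_pos]))).ne'
    have hcont : ContinuousAt
        (fun r : ℝ => θ * Real.log ‖1 - r * Complex.exp (θ * Complex.I)‖) 1 :=
      continuousAt_const.mul ((continuousAt_log (by simpa using hne)).comp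
        (by fun_prop : Continuous fun r : ℝ => ‖1 - r * Complex.exp (θ * Complex.I)‖).continuousAt)
    simpa [hnorm] using hcont.tendsto.mono_left nhdsWithin_le_nhds

lemma hasSum_one_sub_neg_one_pow_div_pow {k : ℕ} (hk : 1 < k) :
    HasSum (fun n : ℕ => (1 - (-1) ^ n) / (n : ℝ) ^ k)
      (2 * (1 - 1 / 2 ^ k) * ∑' n : ℕ, 1 / (n : ℝ) ^ k) := by
  set a : ℕ → ℝ := fun n => 1 / (n : ℝ) ^ k
  have ha : Summable a := Real.summable_one_div_nat_pow.mpr hk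
  have heven : HasSum (fun m => a (2 * m)) (1 / 2 ^ k * ∑' n, a n) :=
    (ha.hasSum.mul_left _).congr_fun fun m => by simp [a, mul_pow, mul_comm]
  have hodd : HasSum (fun m => a (2 * m + 1)) ((1 - 1 / 2 ^ k) * ∑' n, a n) := by
    have hs : Summable fun m => a (2 * m + 1) :=
      ha.comp_injective (strictMono_id.const_mul two_pos |>.add_const 1).injective
    have hsplit := (heven.even_add_odd hs.hasSum).unique ha.hasSum
    convert hs.hasSum using 1
    linarith
  convert HasSum.even_add_odd (f := fun n : ℕ => (1 - (-1) ^ n) / (n : ℝ) ^ k)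
    (hasSum_zero.congr_fun fun m => by simp [pow_mul])
    ((hodd.mul_left 2).congr_fun fun m => by simp only [a, pow_succ, pow_mul]; push_cast; ring) using 1
  ring

theorem ls3_1_pi :
    ((∫ θ in (0:ℝ)..π, θ * Real.log (2 * Real.sin (θ/2)) : ℝ) : ℂ)
      = 7/4 * riemannZeta 3 := by
  have hseries := hasSum_one_sub_neg_one_pow_div_pow (k := 3) (by norm_num)
  have hintegral : ∫ θ in (0:ℝ)..π, θ * Real.log (2 * sin (θ / 2))
      = ∑' n : ℕ, (1 - (-1) ^ n) / (n : ℝ) ^ 3 := by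
    refine tendsto_nhds_unique (tendsto_integral_mul_log_norm_one_sub_mul_exp.congr' ?_)
      (Real.tendsto_tsum_powerSeries_nhdsWithin_lt hseries.summable.hasSum.tendsto_sum_nat)
    filter_upwards [Ioo_mem_nhdsLT (show (-1 : ℝ) < 1 by norm_num)] with r hr
    exact (hasSum_integral_mul_log_norm_one_sub_mul_exp (abs_lt.mpr hr)).tsum_eq.symm
  rw [hintegral, hseries.tsum_eq, show (3 : ℂ) = (3 : ℕ) by norm_num,
    zeta_nat_eq_tsum_of_gt_one (by norm_num), Complex.ofReal_mul, Complex.ofReal_tsum]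
  push_cast
  norm_num
end
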